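/- Let h be a finite dimensional Leibniz algebra, g a Leibniz algebra, and A a commutative algebra. Then the map γ : Hom_Alg(A(h,g), A) → Hom_Lbz(g, h ⊗ A) given by γ(θ) = (Id_h ⊗ θ) ∘ η_g is a bijection. -/

import Mathlib

open TensorProduct MvPolynomial

/-- The universal polynomial `P_{(a,i,j)} = Σ_u β^u_{ij} X_{au} - Σ_{s,t} τ^a_{st} X_{si} X_{tj}`. -/
noncomputable def univPoly {k : Type*} [Field k] {n : ℕ} {I : Type*}
    (τ : Fin n → Fin n → Fin n → k) (β : I → I → I →₀ k)
    (a : Fin n) (i j : I) : MvPolynomial (Fin n × I) k :=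
  (β i j).sum (fun u c => C c * X (a, u)) -
    ∑ s : Fin n, ∑ t : Fin n, C (τ s t a) * X (s, i) * X (t, j)

/-- The ideal generated by the universal polynomials. -/
noncomputable def univIdeal {k : Type*} [Field k] {n : ℕ} {I : Type*}
    (τ : Fin n → Fin n → Fin n → k) (β : I → I → I →₀ k) :
    Ideal (MvPolynomial (Fin n × I) k) :=
  Ideal.span (Set.range fun p : Fin n × I × I => univPoly τ β p.1 p.2.1 p.2.2)

/-- The universal algebra `A(h,g)`. -/
noncomputable abbrev univAlg {k : Type*} [Field k] {n : ℕ} {I : Type*}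
    (τ : Fin n → Fin n → Fin n → k) (β : I → I → I →₀ k) :=
  MvPolynomial (Fin n × I) k ⧸ univIdeal τ β

/-- The generator `x_{si}` of `A(h,g)`. -/
noncomputable def univGen {k : Type*} [Field k] {n : ℕ} {I : Type*}
    (τ : Fin n → Fin n → Fin n → k) (β : I → I → I →₀ k)
    (s : Fin n) (i : I) : univAlg τ β :=
  Ideal.Quotient.mk (univIdeal τ β) (X (s, i))


/-!
Writing `f (f_i) = Σ_s e_s ⊗ c_{si}`, a linear map `f : g → h ⊗ A` is determined by its
coefficient family `c : Fin n → I → A`, and comparing coordinates of `f [f_i, f_j]` and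
`[f f_i, f f_j]` shows that `f` preserves brackets exactly when `c` satisfies the relations
`Σ_u β^u_{ij} c_{au} = Σ_{s,t} τ^a_{st} c_{si} c_{tj}`, i.e. when `x_{si} ↦ c_{si}` kills the
`P_{(a,i,j)}`. Such families are precisely the algebra maps `A(h,g) → A`, and the coefficient
family of `(Id ⊗ θ) ∘ η_g` is `θ (x_{si})`.
-/

section Coordinates

variable (R M ι : Type*) [CommSemiring R] [AddCommMonoid M] [Module R M] [Fintype ι]
  [DecidableEq ι]

noncomputable def piScalarLeftEquiv : (ι → R) ⊗[R] M ≃ₗ[R] (ι → M) :=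
  TensorProduct.comm R (ι → R) M ≪≫ₗ piScalarRight R R M ι

variable {R M ι}

@[simp]
lemma piScalarLeftEquiv_tmul (x : ι → R) (m : M) :
    piScalarLeftEquiv R M ι (x ⊗ₜ m) = fun s => x s • m := by
  simp [piScalarLeftEquiv]

@[simp]
lemma piScalarLeftEquiv_sum_single (c : ι → M) :
    piScalarLeftEquiv R M ι (∑ s, Pi.single s 1 ⊗ₜ c s) = c := by
  ext a
  simp [Pi.single_apply]

lemma piScalarLeftEquiv_bracket {A : Type*} [Semiring A] [Algebra R A]
    (τ : ι → ι → ι → R) (bH : (ι → R) →ₗ[R] (ι → R) →ₗ[R] (ι → R))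
    (hbH : ∀ i j : ι, bH (Pi.single i 1) (Pi.single j 1) = fun s => τ i j s)
    (B : (ι → R) ⊗[R] A →ₗ[R] (ι → R) ⊗[R] A →ₗ[R] (ι → R) ⊗[R] A)
    (hB : ∀ (x y : ι → R) (a c : A), B (x ⊗ₜ[R] a) (y ⊗ₜ[R] c) = bH x y ⊗ₜ[R] (a * c))
    (x y : ι → A) (a : ι) :
    piScalarLeftEquiv R A ι
        (B (∑ s, Pi.single s 1 ⊗ₜ x s) (∑ t, Pi.single t 1 ⊗ₜ y t)) a =
      ∑ s, ∑ t, τ s t a • (x s * y t) := by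
  simp only [map_sum, LinearMap.coe_sum, Finset.sum_apply, hB, hbH, piScalarLeftEquiv_tmul]
  exact Finset.sum_comm

end Coordinates

section Coefficients

variable {R M ι I : Type*} [CommSemiring R] [AddCommMonoid M] [Module R M] [Fintype ι]
  [DecidableEq ι]

noncomputable def tensorCoeffs (f : (I →₀ R) →ₗ[R] (ι → R) ⊗[R] M) (s : ι) (i : I) : M :=
  piScalarLeftEquiv R M ι (f (Finsupp.single i 1)) s

lemma apply_single_eq_sum_tensorCoeffs (f : (I →₀ R) →ₗ[R] (ι → R) ⊗[R] M) (i : I) :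
    f (Finsupp.single i 1) = ∑ s, Pi.single s 1 ⊗ₜ tensorCoeffs f s i :=
  (piScalarLeftEquiv R M ι).injective (by rw [piScalarLeftEquiv_sum_single]; rfl)

lemma piScalarLeftEquiv_apply_eq_sum_tensorCoeffs (f : (I →₀ R) →ₗ[R] (ι → R) ⊗[R] M)
    (l : I →₀ R) (s : ι) :
    piScalarLeftEquiv R M ι (f l) s = l.sum fun u r => r • tensorCoeffs f s u := by
  conv_lhs => rw [← l.sum_single]
  rw [map_finsuppSum, map_finsuppSum, Finsupp.sum_apply']
  refine Finsupp.sum_congr fun u _ => ?_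
  rw [← Finsupp.smul_single_one, map_smul, map_smul]
  rfl

lemma tensorCoeffs_injective :
    Function.Injective (tensorCoeffs : ((I →₀ R) →ₗ[R] (ι → R) ⊗[R] M) → ι → I → M) :=
  fun f g h => Finsupp.lhom_ext' fun i => LinearMap.ext_ring <| by
    simp only [LinearMap.comp_apply, Finsupp.lsingle_apply, apply_single_eq_sum_tensorCoeffs, h]

end Coefficients

lemma map_bracket_iff_single {R N I : Type*} [CommSemiring R] [AddCommMonoid N] [Module R N]
    (bG : (I →₀ R) →ₗ[R] (I →₀ R) →ₗ[R] (I →₀ R)) (B : N →ₗ[R] N →ₗ[R] N)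
    (f : (I →₀ R) →ₗ[R] N) :
    (∀ u v, f (bG u v) = B (f u) (f v)) ↔
      ∀ i j, f (bG (Finsupp.single i 1) (Finsupp.single j 1)) =
        B (f (Finsupp.single i 1)) (f (Finsupp.single j 1)) := by
  refine ⟨fun h i j => h _ _, fun h u v => ?_⟩
  have hbil : bG.compr₂ f = B.compl₁₂ f f := by
    ext i j
    simpa using h i j
  simpa using LinearMap.congr_fun₂ hbil u v

section UniversalRelation

variable {R ι I A : Type*} [CommSemiring R] [Fintype ι] [Semiring A]
  [Algebra R A] (τ : ι → ι → ι → R) (β : I → I → I →₀ R)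

def SatisfiesUnivRel (c : ι → I → A) : Prop :=
  ∀ i j a, ((β i j).sum fun u r => r • c a u) = ∑ s, ∑ t, τ s t a • (c s i * c t j)

variable {τ β} in
lemma SatisfiesUnivRel.map {A' : Type*} [Semiring A'] [Algebra R A'] {c : ι → I → A}
    (hc : SatisfiesUnivRel τ β c) (θ : A →ₐ[R] A') :
    SatisfiesUnivRel τ β fun s i => θ (c s i) := fun i j a => by
  simpa only [map_finsuppSum, map_sum, map_smul, map_mul] using congrArg θ (hc i j a)

theorem map_bracket_iff_satisfiesUnivRel [DecidableEq ι]
    (bH : (ι → R) →ₗ[R] (ι → R) →ₗ[R] (ι → R))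
    (hbH : ∀ i j : ι, bH (Pi.single i 1) (Pi.single j 1) = fun s => τ i j s)
    (bG : (I →₀ R) →ₗ[R] (I →₀ R) →ₗ[R] (I →₀ R))
    (hbG : ∀ i j : I, bG (Finsupp.single i 1) (Finsupp.single j 1) = β i j)
    (B : (ι → R) ⊗[R] A →ₗ[R] (ι → R) ⊗[R] A →ₗ[R] (ι → R) ⊗[R] A)
    (hB : ∀ (x y : ι → R) (a c : A), B (x ⊗ₜ[R] a) (y ⊗ₜ[R] c) = bH x y ⊗ₜ[R] (a * c))
    (f : (I →₀ R) →ₗ[R] (ι → R) ⊗[R] A) :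
    (∀ u v, f (bG u v) = B (f u) (f v)) ↔ SatisfiesUnivRel τ β (tensorCoeffs f) := by
  rw [map_bracket_iff_single]
  refine forall₂_congr fun i j => ?_
  rw [hbG, apply_single_eq_sum_tensorCoeffs f i, apply_single_eq_sum_tensorCoeffs f j,
    ← (piScalarLeftEquiv R A ι).injective.eq_iff, funext_iff]
  refine forall_congr' fun a => ?_
  rw [piScalarLeftEquiv_apply_eq_sum_tensorCoeffs, piScalarLeftEquiv_bracket τ bH hbH B hB]

end UniversalRelation

section UniversalAlgebra

variable {k : Type*} [Field k] {n : ℕ} {I : Type*} (τ : Fin n → Fin n → Fin n → k)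
  (β : I → I → I →₀ k) {A : Type*} [CommRing A] [Algebra k A]

lemma aeval_univPoly_eq_zero_iff (c : Fin n → I → A) (a : Fin n) (i j : I) :
    aeval (fun p : Fin n × I => c p.1 p.2) (univPoly τ β a i j) = 0 ↔
      ((β i j).sum fun u r => r • c a u) = ∑ s, ∑ t, τ s t a • (c s i * c t j) := by
  rw [univPoly, map_sub, sub_eq_zero]
  simp only [map_finsuppSum, map_sum, map_mul, aeval_C, aeval_X, Algebra.smul_def, mul_assoc]

lemma satisfiesUnivRel_univGen : SatisfiesUnivRel τ β (univGen τ β) := fun i j a => by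
  have hmem : univPoly τ β a i j ∈ univIdeal τ β := Ideal.subset_span ⟨(a, i, j), rfl⟩
  rw [← aeval_univPoly_eq_zero_iff, ← Ideal.Quotient.eq_zero_iff_mem.mpr hmem,
    ← Ideal.Quotient.mkₐ_eq_mk k, MvPolynomial.aeval_unique (Ideal.Quotient.mkₐ k _)]
  rfl

variable {τ β}

lemma univIdeal_le_ker_aeval {c : Fin n → I → A} (hc : SatisfiesUnivRel τ β c) :
    univIdeal τ β ≤ RingHom.ker (aeval fun p : Fin n × I => c p.1 p.2) :=
  Ideal.span_le.mpr <| Set.range_subset_iff.mpr fun ⟨a, i, j⟩ =>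
    (aeval_univPoly_eq_zero_iff τ β c a i j).mpr (hc i j a)

noncomputable def univLift (c : Fin n → I → A) (hc : SatisfiesUnivRel τ β c) :
    univAlg τ β →ₐ[k] A :=
  Ideal.Quotient.liftₐ _ (aeval fun p : Fin n × I => c p.1 p.2) fun _ hp =>
    RingHom.mem_ker.mp (univIdeal_le_ker_aeval hc hp)

@[simp]
lemma univLift_univGen (c : Fin n → I → A) (hc : SatisfiesUnivRel τ β c) (s : Fin n) (i : I) :
    univLift c hc (univGen τ β s i) = c s i := by
  rw [univLift, univGen, ← Ideal.Quotient.mkₐ_eq_mk k, ← AlgHom.comp_apply,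
    Ideal.Quotient.liftₐ_comp, aeval_X]

lemma univAlg_algHom_ext {θ θ' : univAlg τ β →ₐ[k] A}
    (h : ∀ s i, θ (univGen τ β s i) = θ' (univGen τ β s i)) : θ = θ' :=
  Ideal.Quotient.algHom_ext _ <| MvPolynomial.algHom_ext fun p => h p.1 p.2

lemma tensorCoeffs_map_comp {η : (I →₀ k) →ₗ[k] (Fin n → k) ⊗[k] univAlg τ β}
    (hη : ∀ i : I, η (Finsupp.single i 1) = ∑ s : Fin n, Pi.single s 1 ⊗ₜ[k] univGen τ β s i)
    (θ : univAlg τ β →ₐ[k] A) :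
    tensorCoeffs (TensorProduct.map LinearMap.id θ.toLinearMap ∘ₗ η) =
      fun s i => θ (univGen τ β s i) := by
  ext s i
  simp [tensorCoeffs, hη, map_sum, Pi.single_apply]

end UniversalAlgebra

theorem stmt_3 (k : Type*) [Field k] (n : ℕ) (I : Type*)
    (τ : Fin n → Fin n → Fin n → k) (β : I → I → I →₀ k)
    (bH : (Fin n → k) →ₗ[k] (Fin n → k) →ₗ[k] (Fin n → k))
    (hbH : ∀ i j : Fin n, bH (Pi.single i 1) (Pi.single j 1) = fun s => τ i j s)
    (bG : (I →₀ k) →ₗ[k] (I →₀ k) →ₗ[k] (I →₀ k))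
    (hbG : ∀ i j : I, bG (Finsupp.single i 1) (Finsupp.single j 1) = β i j)
    (A : Type*) [CommRing A] [Algebra k A]
    (B : (Fin n → k) ⊗[k] A →ₗ[k] (Fin n → k) ⊗[k] A →ₗ[k] (Fin n → k) ⊗[k] A)
    (hB : ∀ (x y : Fin n → k) (a c : A), B (x ⊗ₜ[k] a) (y ⊗ₜ[k] c) = bH x y ⊗ₜ[k] (a * c))
    (η : (I →₀ k) →ₗ[k] (Fin n → k) ⊗[k] univAlg τ β)
    (hη : ∀ i : I, η (Finsupp.single i 1) =
      ∑ s : Fin n, Pi.single s 1 ⊗ₜ[k] univGen τ β s i) :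
    (∀ θ : univAlg τ β →ₐ[k] A, ∀ u v : I →₀ k,
      (TensorProduct.map LinearMap.id θ.toLinearMap ∘ₗ η) (bG u v) =
        B ((TensorProduct.map LinearMap.id θ.toLinearMap ∘ₗ η) u)
          ((TensorProduct.map LinearMap.id θ.toLinearMap ∘ₗ η) v)) ∧
    (∀ f : (I →₀ k) →ₗ[k] (Fin n → k) ⊗[k] A,
      (∀ u v : I →₀ k, f (bG u v) = B (f u) (f v)) →
        ∃! θ : univAlg τ β →ₐ[k] A,
          TensorProduct.map LinearMap.id θ.toLinearMap ∘ₗ η = f) := by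
  have hom_iff := map_bracket_iff_satisfiesUnivRel τ β bH hbH bG hbG B hB
  refine ⟨fun θ => (hom_iff _).mpr ?_, fun f hf => ?_⟩
  · rw [tensorCoeffs_map_comp hη]
    exact (satisfiesUnivRel_univGen τ β).map θ
  · have hc := (hom_iff f).mp hf
    refine ⟨univLift _ hc, tensorCoeffs_injective ?_, fun θ hθ => univAlg_algHom_ext ?_⟩
    · rw [tensorCoeffs_map_comp hη]
      simp only [univLift_univGen]
    · subst hθ
      simp only [univLift_univGen, tensorCoeffs_map_comp hη, implies_true]
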